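/- arXiv:1711.09549 — 5 statements merged into one kernel-verified Lean document; each statement's English description precedes it below -/
import Mathlib

section
/- Let α ≠ 0, a, b ∈ ℝ, and let q : I → ℝ be a twice differentiable positive function on an open interval I with q(s)^α = a·s + b for all s ∈ I. Let Θ : I → ℝ be an antiderivative of 1/q (i.e. Θ'(s) = 1/q(s)), and suppose U : Θ(I) → ℝ is a differentiable function with U(Θ(s)) = −q'(s) for all s ∈ I. Then U'(Θ(s)) = (α − 1)·U(Θ(s))² for all s ∈ I. -/
/-!
Differentiating `q ^ α = a s + b` gives `q' = (a / α) q ^ (1 - α)`, and differentiating this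
power law once more gives `q'' q = (1 - α) q' ^ 2`. Since `dΘ/ds = 1 / q`, the chain rule turns
`U (Θ s) = -q' s` into `U' (Θ s) = -q'' s * q s = (α - 1) q' s ^ 2 = (α - 1) U (Θ s) ^ 2`.
-/

open Filter Set Topology

theorem HasDerivAt.unique_of_eqOn {𝕜 F : Type*} [NontriviallyNormedField 𝕜]
    [NormedAddCommGroup F] [NormedSpace 𝕜 F] {f g : 𝕜 → F} {f' g' : F} {s : Set 𝕜} {x : 𝕜}
    (hf : HasDerivAt f f' x) (hs : s ∈ 𝓝 x) (hfg : EqOn f g s) (hg : HasDerivAt g g' x) :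
    f' = g' :=
  hf.unique (hg.congr_of_eventuallyEq (eventuallyEq_of_mem hs hfg))

theorem deriv_eq_mul_rpow_of_rpow_eq_affine {α a b : ℝ} (hα : α ≠ 0) {I : Set ℝ}
    (hI : IsOpen I) {q q' : ℝ → ℝ} (hqpos : ∀ s ∈ I, 0 < q s)
    (hq : ∀ s ∈ I, HasDerivAt q (q' s) s) (heq : ∀ s ∈ I, q s ^ α = a * s + b) :
    ∀ s ∈ I, q' s = a / α * q s ^ (1 - α) := by
  intro s hs
  have hpow : HasDerivAt (fun t => q t ^ α) (q' s * α * q s ^ (α - 1)) s :=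
    (hq s hs).rpow_const (Or.inl (hqpos s hs).ne')
  have haff : HasDerivAt (fun t => a * t + b) a s := by
    simpa using ((hasDerivAt_id s).const_mul a).add_const b
  have hderiv : q' s * α * q s ^ (α - 1) = a :=
    HasDerivAt.unique_of_eqOn hpow (hI.mem_nhds hs) heq haff
  have hcancel : q s ^ (α - 1) * q s ^ (1 - α) = 1 := by
    rw [← Real.rpow_add (hqpos s hs)]
    simp
  rw [← hderiv, div_mul_eq_mul_div, mul_assoc, mul_assoc, hcancel]
  field_simp

theorem second_deriv_mul_eq_mul_sq_of_deriv_eq_mul_rpow {c β : ℝ} {I : Set ℝ} (hI : IsOpen I)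
    {q q' q'' : ℝ → ℝ} (hqpos : ∀ s ∈ I, 0 < q s) (hq : ∀ s ∈ I, HasDerivAt q (q' s) s)
    (hq' : ∀ s ∈ I, HasDerivAt q' (q'' s) s) (hode : ∀ s ∈ I, q' s = c * q s ^ β) :
    ∀ s ∈ I, q'' s * q s = β * q' s ^ 2 := by
  intro s hs
  have hqne : q s ≠ 0 := (hqpos s hs).ne'
  have hrhs : HasDerivAt (fun t => c * q t ^ β) (c * (q' s * β * q s ^ (β - 1))) s :=
    ((hq s hs).rpow_const (Or.inl hqne)).const_mul c
  have hq'' : q'' s = c * (q' s * β * q s ^ (β - 1)) :=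
    HasDerivAt.unique_of_eqOn (hq' s hs) (hI.mem_nhds hs) hode hrhs
  rw [hq'', Real.rpow_sub_one hqne, sq]
  nth_rewrite 2 [hode s hs]
  field_simp

theorem deriv_comp_eq_mul_of_hasDerivAt_one_div {I : Set ℝ} {s : ℝ} (hs : I ∈ 𝓝 s)
    {q Θ U g : ℝ → ℝ} {U' g' : ℝ} (hqne : q s ≠ 0) (hΘ : HasDerivAt Θ (1 / q s) s)
    (hU : HasDerivAt U U' (Θ s)) (hg : HasDerivAt g g' s) (hUg : EqOn (U ∘ Θ) g I) :
    U' = g' * q s := by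
  have hcomp : U' * (1 / q s) = g' := HasDerivAt.unique_of_eqOn (hU.comp s hΘ) hs hUg hg
  rw [← hcomp]
  field_simp

theorem lac_similarity_curvature_bernoulli_general (α a b : ℝ) (hα : α ≠ 0)
    (I : Set ℝ) (hIopen : IsOpen I)
    (q q' q'' Θ U U' : ℝ → ℝ)
    (hqpos : ∀ s ∈ I, 0 < q s)
    (hq : ∀ s ∈ I, HasDerivAt q (q' s) s)
    (hq' : ∀ s ∈ I, HasDerivAt q' (q'' s) s)
    (heq : ∀ s ∈ I, q s ^ α = a * s + b)
    (hΘ : ∀ s ∈ I, HasDerivAt Θ (1 / q s) s)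
    (hU : ∀ θ ∈ Θ '' I, HasDerivAt U (U' θ) θ)
    (hUval : ∀ s ∈ I, U (Θ s) = -q' s) :
    ∀ s ∈ I, U' (Θ s) = (α - 1) * (U (Θ s)) ^ 2 := by
  intro s hs
  have hode := deriv_eq_mul_rpow_of_rpow_eq_affine hα hIopen hqpos hq heq
  have hq'' : q'' s * q s = (1 - α) * q' s ^ 2 :=
    second_deriv_mul_eq_mul_sq_of_deriv_eq_mul_rpow hIopen hqpos hq hq' hode s hs
  have hU' : U' (Θ s) = -q'' s * q s :=
    deriv_comp_eq_mul_of_hasDerivAt_one_div (hIopen.mem_nhds hs) (hqpos s hs).ne' (hΘ s hs)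
      (hU (Θ s) (mem_image_of_mem Θ hs)) (hq' s hs).neg hUval
  rw [hU', hUval s hs]
  linear_combination -hq''

/-- The similarity curvature `u` of a log-aesthetic curve of slope `α ≠ 0`
(whose curvature radius satisfies `q ^ α = a s + b` in arc length `s`), expressed as a
function `U` of the turning angle `θ = Θ(s)` (where `Θ' = 1/q`) via `U(Θ(s)) = -q'(s)`,
satisfies the Bernoulli equation `U' = (α - 1) U²`. -/
theorem lac_similarity_curvature_bernoulli (α a b : ℝ) (hα : α ≠ 0)
    (I : Set ℝ) (hIopen : IsOpen I) (hIinterval : I.OrdConnected)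
    (q q' q'' Θ U U' : ℝ → ℝ)
    (hqpos : ∀ s ∈ I, 0 < q s)
    (hq : ∀ s ∈ I, HasDerivAt q (q' s) s)
    (hq' : ∀ s ∈ I, HasDerivAt q' (q'' s) s)
    (heq : ∀ s ∈ I, q s ^ α = a * s + b)
    (hΘ : ∀ s ∈ I, HasDerivAt Θ (1 / q s) s)
    (hU : ∀ θ ∈ Θ '' I, HasDerivAt U (U' θ) θ)
    (hUval : ∀ s ∈ I, U (Θ s) = -q' s) :
    ∀ s ∈ I, U' (Θ s) = (α - 1) * (U (Θ s)) ^ 2 :=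
  lac_similarity_curvature_bernoulli_general α a b hα I hIopen q q' q'' Θ U U' hqpos hq hq' heq hΘ
    hU hUval
end

section
/- Let I ⊆ ℝ be an interval, and for j = 1, 2 let q_j : I → ℝ be differentiable positive functions and γ_j : I → ℂ differentiable with γ_j'(θ) = q_j(θ)·exp(iθ) for all θ ∈ I. If −q₁'(θ)/q₁(θ) = −q₂'(θ)/q₂(θ) for all θ ∈ I, then there exist r > 0 and b ∈ ℂ such that γ₂(θ) = r·γ₁(θ) + b for all θ ∈ I. -/
/-! Equal similarity curvature means `q₁'/q₁ = q₂'/q₂`, so the ratio `q₂/q₁` has zero derivative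
and equals a constant `r > 0` on the interval. Then `γ₂' = r γ₁'`, so `γ₂ - r γ₁` is constant. -/

section

variable {E : Type*} [NormedAddCommGroup E] [NormedSpace ℝ E] {s : Set ℝ}

theorem Convex.is_const_of_hasDerivAt_zero {f : ℝ → E} (hs : Convex ℝ s)
    (hf : ∀ x ∈ s, HasDerivAt f 0 x) {x y : ℝ} (hx : x ∈ s) (hy : y ∈ s) : f x = f y := by
  have h := hs.norm_image_sub_le_of_norm_hasDerivWithin_le
    (fun z hz => (hf z hz).hasDerivWithinAt) (C := 0) (fun _ _ => norm_zero.le) hy hx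
  rwa [zero_mul, norm_le_zero_iff, sub_eq_zero] at h

theorem Convex.eq_smul_add_of_hasDerivAt_eq_smul {f g f' : ℝ → E} {c : ℝ} (hs : Convex ℝ s)
    (hf : ∀ x ∈ s, HasDerivAt f (f' x) x) (hg : ∀ x ∈ s, HasDerivAt g (c • f' x) x)
    {x₀ : ℝ} (hx₀ : x₀ ∈ s) : ∀ x ∈ s, g x = c • f x + (g x₀ - c • f x₀) := by
  intro x hx
  have hderiv : ∀ y ∈ s, HasDerivAt (g - c • f) 0 y := fun y hy => by
    simpa using (hg y hy).sub ((hf y hy).const_smul c)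
  have hconst := hs.is_const_of_hasDerivAt_zero hderiv hx hx₀
  rw [Pi.sub_apply, Pi.sub_apply, Pi.smul_apply, Pi.smul_apply] at hconst
  rw [← hconst]
  abel

theorem Convex.eq_div_mul_of_div_deriv_eq {f g f' g' : ℝ → ℝ} (hs : Convex ℝ s)
    (hf0 : ∀ x ∈ s, f x ≠ 0) (hg0 : ∀ x ∈ s, g x ≠ 0)
    (hf : ∀ x ∈ s, HasDerivAt f (f' x) x) (hg : ∀ x ∈ s, HasDerivAt g (g' x) x)
    (h : ∀ x ∈ s, f' x / f x = g' x / g x) {x₀ : ℝ} (hx₀ : x₀ ∈ s) :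
    ∀ x ∈ s, g x = g x₀ / f x₀ * f x := by
  intro x hx
  have hderiv : ∀ y ∈ s, HasDerivAt (g / f) 0 y := fun y hy => by
    have hwronskian : g' y * f y - g y * f' y = 0 := by
      have := h y hy
      field_simp [hf0 y hy, hg0 y hy] at this
      linarith
    simpa [hwronskian] using (hg y hy).div (hf y hy) (hf0 y hy)
  have hconst := hs.is_const_of_hasDerivAt_zero hderiv hx hx₀
  rw [Pi.div_apply, Pi.div_apply] at hconst
  rw [← hconst]
  field_simp [hf0 x hx]

end

/-- uniqueness in the fundamental theorem of similarity plane geometry.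
Two curves parametrized by the turning angle with the same similarity curvature
`u = -q'/q` differ by a scaling and a translation. -/
theorem similarity_curvature_determines_curve (I : Set ℝ) (hIinterval : I.OrdConnected)
    (q₁ q₂ q₁' q₂' : ℝ → ℝ) (γ₁ γ₂ : ℝ → ℂ)
    (hq₁pos : ∀ θ ∈ I, 0 < q₁ θ) (hq₂pos : ∀ θ ∈ I, 0 < q₂ θ)
    (hq₁ : ∀ θ ∈ I, HasDerivAt q₁ (q₁' θ) θ)
    (hq₂ : ∀ θ ∈ I, HasDerivAt q₂ (q₂' θ) θ)
    (hγ₁ : ∀ θ ∈ I, HasDerivAt γ₁ ((q₁ θ : ℂ) * Complex.exp (θ * Complex.I)) θ)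
    (hγ₂ : ∀ θ ∈ I, HasDerivAt γ₂ ((q₂ θ : ℂ) * Complex.exp (θ * Complex.I)) θ)
    (hu : ∀ θ ∈ I, -q₁' θ / q₁ θ = -q₂' θ / q₂ θ) :
    ∃ r : ℝ, 0 < r ∧ ∃ b : ℂ, ∀ θ ∈ I, γ₂ θ = (r : ℂ) * γ₁ θ + b := by
  rcases I.eq_empty_or_nonempty with hI | ⟨θ₀, hθ₀⟩
  · exact ⟨1, one_pos, 0, by simp [hI]⟩
  have hconv : Convex ℝ I := hIinterval.convex
  set r := q₂ θ₀ / q₁ θ₀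
  have hratio : ∀ θ ∈ I, q₂ θ = r * q₁ θ :=
    hconv.eq_div_mul_of_div_deriv_eq (fun θ hθ => (hq₁pos θ hθ).ne')
      (fun θ hθ => (hq₂pos θ hθ).ne') hq₁ hq₂
      (fun θ hθ => by simpa only [neg_div, neg_inj] using hu θ hθ) hθ₀
  have hγ₂' : ∀ θ ∈ I, HasDerivAt γ₂ (r • ((q₁ θ : ℂ) * Complex.exp (θ * Complex.I))) θ :=
    fun θ hθ => by
      rw [Complex.real_smul, ← mul_assoc, ← Complex.ofReal_mul, ← hratio θ hθ]
      exact hγ₂ θ hθ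
  refine ⟨r, div_pos (hq₂pos θ₀ hθ₀) (hq₁pos θ₀ hθ₀), γ₂ θ₀ - r * γ₁ θ₀, fun θ hθ => ?_⟩
  simpa only [Complex.real_smul] using hconv.eq_smul_add_of_hasDerivAt_eq_smul hγ₁ hγ₂' hθ₀ θ hθ
end

section
/- Let b ∈ ℝ, let u : ℝ × ℝ → ℝ be smooth, and let F : ℝ × ℝ → Matrix (2×2, ℝ) be smooth with F(θ,t) invertible for every (θ,t). Let J = [[0,−1],[1,0]] and let I₂ be the identity matrix. Suppose ∂_θ F = F·(−u·I₂ + J) and ∂_t F = F·((−∂_θ u + u² + 1 − b·u)·I₂ + b·J) hold everywhere. Then u satisfies the Burgers equation ∂_t u = ∂_θ(∂_θ u − u² + b·u). -/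
attribute [local instance] Matrix.normedAddCommGroup Matrix.normedSpace

/-- Partial derivative in the first variable. -/
noncomputable def pderivFst {E : Type*} [NormedAddCommGroup E] [NormedSpace ℝ E]
    (f : ℝ × ℝ → E) (p : ℝ × ℝ) : E := deriv (fun x => f (x, p.2)) p.1

/-- Partial derivative in the second variable. -/
noncomputable def pderivSnd {E : Type*} [NormedAddCommGroup E] [NormedSpace ℝ E]
    (f : ℝ × ℝ → E) (p : ℝ × ℝ) : E := deriv (fun y => f (p.1, y)) p.2

section AuxLemmas

variable {E : Type*} [NormedAddCommGroup E] [NormedSpace ℝ E]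

lemma aux_hasDerivAt_fst {f : ℝ × ℝ → E} (p : ℝ × ℝ) (hf : DifferentiableAt ℝ f p) :
    HasDerivAt (fun x => f (x, p.2)) (fderiv ℝ f p ((1 : ℝ), (0 : ℝ))) p.1 := by
  have h1 : HasDerivAt (fun x : ℝ => (x, p.2)) ((1 : ℝ), (0 : ℝ)) p.1 :=
    HasDerivAt.prodMk (hasDerivAt_id p.1) (hasDerivAt_const p.1 p.2)
  exact hf.hasFDerivAt.comp_hasDerivAt p.1 h1

lemma aux_hasDerivAt_snd {f : ℝ × ℝ → E} (p : ℝ × ℝ) (hf : DifferentiableAt ℝ f p) :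
    HasDerivAt (fun y => f (p.1, y)) (fderiv ℝ f p ((0 : ℝ), (1 : ℝ))) p.2 := by
  have h1 : HasDerivAt (fun y : ℝ => (p.1, y)) ((0 : ℝ), (1 : ℝ)) p.2 :=
    HasDerivAt.prodMk (hasDerivAt_const p.2 p.1) (hasDerivAt_id p.2)
  exact hf.hasFDerivAt.comp_hasDerivAt p.2 h1

lemma pderivFst_eq {f : ℝ × ℝ → E} (hf : Differentiable ℝ f) (p : ℝ × ℝ) :
    pderivFst f p = fderiv ℝ f p ((1 : ℝ), (0 : ℝ)) :=
  (aux_hasDerivAt_fst p (hf p)).deriv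

lemma pderivSnd_eq {f : ℝ × ℝ → E} (hf : Differentiable ℝ f) (p : ℝ × ℝ) :
    pderivSnd f p = fderiv ℝ f p ((0 : ℝ), (1 : ℝ)) :=
  (aux_hasDerivAt_snd p (hf p)).deriv

lemma hasDerivAt_pderivFst {f : ℝ × ℝ → E} (hf : Differentiable ℝ f) (p : ℝ × ℝ) :
    HasDerivAt (fun x => f (x, p.2)) (pderivFst f p) p.1 := by
  rw [pderivFst_eq hf p]; exact aux_hasDerivAt_fst p (hf p)

lemma hasDerivAt_pderivSnd {f : ℝ × ℝ → E} (hf : Differentiable ℝ f) (p : ℝ × ℝ) :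
    HasDerivAt (fun y => f (p.1, y)) (pderivSnd f p) p.2 := by
  rw [pderivSnd_eq hf p]; exact aux_hasDerivAt_snd p (hf p)

lemma contDiff_pderivFst {f : ℝ × ℝ → E} (hf : ContDiff ℝ (⊤ : ℕ∞) f) :
    ContDiff ℝ (⊤ : ℕ∞) (fun q => pderivFst f q) := by
  have e : (fun q => pderivFst f q) = fun q => fderiv ℝ f q ((1 : ℝ), (0 : ℝ)) :=
    funext fun q => pderivFst_eq (hf.differentiable (by simp)) q
  rw [e]
  exact (hf.fderiv_right (m := (⊤ : ℕ∞)) (by simp)).clm_apply contDiff_const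

/-- Clairaut's theorem in the form needed here: for a smooth function on `ℝ × ℝ`
the mixed partial derivatives agree. -/
lemma pderiv_comm {f : ℝ × ℝ → E} (hf : ContDiff ℝ (⊤ : ℕ∞) f) (p : ℝ × ℝ) :
    pderivSnd (fun q => pderivFst f q) p = pderivFst (fun q => pderivSnd f q) p := by
  have hdiff : Differentiable ℝ f := hf.differentiable (by simp)
  have hg : ContDiff ℝ (⊤ : ℕ∞) (fderiv ℝ f) := hf.fderiv_right (m := (⊤ : ℕ∞)) (by simp)
  have hgd : Differentiable ℝ (fderiv ℝ f) := hg.differentiable (by simp)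
  have e1 : (fun q => pderivFst f q) = fun q => fderiv ℝ f q ((1 : ℝ), (0 : ℝ)) :=
    funext fun q => pderivFst_eq hdiff q
  have e2 : (fun q => pderivSnd f q) = fun q => fderiv ℝ f q ((0 : ℝ), (1 : ℝ)) :=
    funext fun q => pderivSnd_eq hdiff q
  have hsymm : IsSymmSndFDerivAt ℝ f p :=
    (hf.contDiffAt).isSymmSndFDerivAt (by rw [minSmoothness_of_isRCLikeNormedField]; exact WithTop.coe_le_coe.2 (le_top : (2 : ℕ∞) ≤ ⊤))
  have hL : HasDerivAt (fun y => fderiv ℝ f (p.1, y) ((1 : ℝ), (0 : ℝ)))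
      (fderiv ℝ (fderiv ℝ f) p ((0 : ℝ), (1 : ℝ)) ((1 : ℝ), (0 : ℝ))) p.2 := by
    have h1 := hasDerivAt_pderivSnd hgd p
    rw [pderivSnd_eq hgd p] at h1
    have h2 := h1.clm_apply (hasDerivAt_const p.2 ((1 : ℝ), (0 : ℝ)))
    simpa using h2
  have hR : HasDerivAt (fun x => fderiv ℝ f (x, p.2) ((0 : ℝ), (1 : ℝ)))
      (fderiv ℝ (fderiv ℝ f) p ((1 : ℝ), (0 : ℝ)) ((0 : ℝ), (1 : ℝ))) p.1 := by
    have h1 := hasDerivAt_pderivFst hgd p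
    rw [pderivFst_eq hgd p] at h1
    have h2 := h1.clm_apply (hasDerivAt_const p.1 ((0 : ℝ), (1 : ℝ)))
    simpa using h2
  rw [e1, e2]
  have L : pderivSnd (fun q => fderiv ℝ f q ((1 : ℝ), (0 : ℝ))) p
      = fderiv ℝ (fderiv ℝ f) p ((0 : ℝ), (1 : ℝ)) ((1 : ℝ), (0 : ℝ)) := hL.deriv
  have R : pderivFst (fun q => fderiv ℝ f q ((0 : ℝ), (1 : ℝ))) p
      = fderiv ℝ (fderiv ℝ f) p ((1 : ℝ), (0 : ℝ)) ((0 : ℝ), (1 : ℝ)) := hR.deriv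
  rw [L, R, hsymm.eq]

end AuxLemmas

/-- Product rule for matrix-valued functions of a real variable. -/
lemma hasDerivAt_matmul {f g : ℝ → Matrix (Fin 2) (Fin 2) ℝ}
    {f' g' : Matrix (Fin 2) (Fin 2) ℝ} {x : ℝ}
    (hf : HasDerivAt f f' x) (hg : HasDerivAt g g' x) :
    HasDerivAt (fun y => f y * g y) (f' * g x + f x * g') x := by
  have hfe : ∀ i j, HasDerivAt (fun y => f y i j) (f' i j) x :=
    fun i j => hasDerivAt_pi.1 (hasDerivAt_pi.1 hf i) j
  have hge : ∀ i j, HasDerivAt (fun y => g y i j) (g' i j) x :=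
    fun i j => hasDerivAt_pi.1 (hasDerivAt_pi.1 hg i) j
  apply hasDerivAt_pi.2; intro i; apply hasDerivAt_pi.2; intro j
  have h : HasDerivAt (fun y => ∑ k, f y i k * g y k j)
      (∑ k, (f' i k * g x k j + f x i k * g' k j)) x :=
    HasDerivAt.fun_sum fun k _ => (hfe i k).mul (hge k j)
  simp only [Matrix.mul_apply, Matrix.add_apply]
  rw [← Finset.sum_add_distrib]
  exact h

lemma matrix_comm_aux (x y z : ℝ) :
    (x • (1 : Matrix (Fin 2) (Fin 2) ℝ) + !![0, -1; 1, 0])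
        * (y • 1 + z • !![0, -1; 1, 0])
      = (y • (1 : Matrix (Fin 2) (Fin 2) ℝ) + z • !![0, -1; 1, 0])
        * (x • 1 + !![0, -1; 1, 0]) := by
  ext i j
  fin_cases i <;> fin_cases j <;>
    simp [Matrix.mul_apply, Fin.sum_univ_two, Matrix.one_apply] <;> ring

/-- the compatibility condition of the Lax pair
`∂_θ F = F(-u I + J)`, `∂_t F = F((-u_θ + u² + 1 - b u) I + b J)` for an invertible
frame `F` is the Burgers equation `u_t = ∂_θ(u_θ - u² + b u)`. -/
theorem burgers_from_lax_pair (b : ℝ) (u : ℝ × ℝ → ℝ)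
    (F : ℝ × ℝ → Matrix (Fin 2) (Fin 2) ℝ)
    (J : Matrix (Fin 2) (Fin 2) ℝ) (hJ : J = !![0, -1; 1, 0])
    (hu : ContDiff ℝ (⊤ : ℕ∞) u) (hF : ContDiff ℝ (⊤ : ℕ∞) F)
    (hFinv : ∀ p : ℝ × ℝ, IsUnit (F p))
    (hθ : ∀ p : ℝ × ℝ,
      pderivFst F p = F p * ((-u p) • (1 : Matrix (Fin 2) (Fin 2) ℝ) + J))
    (ht : ∀ p : ℝ × ℝ,
      pderivSnd F p
        = F p * ((-pderivFst u p + u p ^ 2 + 1 - b * u p) • (1 : Matrix (Fin 2) (Fin 2) ℝ)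
            + b • J)) :
    ∀ p : ℝ × ℝ,
      pderivSnd u p = pderivFst (fun p' => pderivFst u p' - u p' ^ 2 + b * u p') p := by
  intro p
  -- scalar coefficient functions
  set c : ℝ × ℝ → ℝ := fun q => -pderivFst u q + u q ^ 2 + 1 - b * u q with hc_def
  have hud : Differentiable ℝ u := hu.differentiable (by simp)
  have hFd : Differentiable ℝ F := hF.differentiable (by simp)
  have huθ : ContDiff ℝ (⊤ : ℕ∞) (fun q => pderivFst u q) := contDiff_pderivFst hu
  have hc : ContDiff ℝ (⊤ : ℕ∞) c := by
    exact ((huθ.neg.add (hu.pow 2)).add contDiff_const).sub (contDiff_const.mul hu)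
  have hcd : Differentiable ℝ c := hc.differentiable (by simp)
  -- derivative of F in each variable with the Lax pair substituted
  have hFt : HasDerivAt (fun y => F (p.1, y))
      (F p * (c p • (1 : Matrix (Fin 2) (Fin 2) ℝ) + b • J)) p.2 := by
    have h := hasDerivAt_pderivSnd hFd p
    rwa [ht p] at h
  have hFθ : HasDerivAt (fun x => F (x, p.2))
      (F p * ((-u p) • (1 : Matrix (Fin 2) (Fin 2) ℝ) + J)) p.1 := by
    have h := hasDerivAt_pderivFst hFd p
    rwa [hθ p] at h
  -- derivative of the coefficient matrices
  have hu2 : HasDerivAt (fun y => u (p.1, y)) (pderivSnd u p) p.2 :=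
    hasDerivAt_pderivSnd hud p
  have hA' : HasDerivAt (fun y => (-u (p.1, y)) • (1 : Matrix (Fin 2) (Fin 2) ℝ) + J)
      ((-pderivSnd u p) • (1 : Matrix (Fin 2) (Fin 2) ℝ)) p.2 :=
    (hu2.neg.smul_const (1 : Matrix (Fin 2) (Fin 2) ℝ)).add_const J
  have hc1 : HasDerivAt (fun x => c (x, p.2)) (pderivFst c p) p.1 :=
    hasDerivAt_pderivFst hcd p
  have hB' : HasDerivAt (fun x => c (x, p.2) • (1 : Matrix (Fin 2) (Fin 2) ℝ) + b • J)
      ((pderivFst c p) • (1 : Matrix (Fin 2) (Fin 2) ℝ)) p.1 :=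
    (hc1.smul_const (1 : Matrix (Fin 2) (Fin 2) ℝ)).add_const (b • J)
  -- mixed partial derivatives of F agree
  have hmix := pderiv_comm hF p
  have e3 : (fun q => pderivFst F q)
      = fun q => F q * ((-u q) • (1 : Matrix (Fin 2) (Fin 2) ℝ) + J) := funext hθ
  have e4 : (fun q => pderivSnd F q)
      = fun q => F q * (c q • (1 : Matrix (Fin 2) (Fin 2) ℝ) + b • J) := funext ht
  rw [e3, e4] at hmix
  -- compute both mixed partials via the product rule
  have L : pderivSnd (fun q => F q * ((-u q) • (1 : Matrix (Fin 2) (Fin 2) ℝ) + J)) p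
      = F p * (c p • (1 : Matrix (Fin 2) (Fin 2) ℝ) + b • J) * ((-u p) • (1 : Matrix (Fin 2) (Fin 2) ℝ) + J)
        + F p * ((-pderivSnd u p) • (1 : Matrix (Fin 2) (Fin 2) ℝ)) :=
    (hasDerivAt_matmul hFt hA').deriv
  have R : pderivFst (fun q => F q * (c q • (1 : Matrix (Fin 2) (Fin 2) ℝ) + b • J)) p
      = F p * ((-u p) • (1 : Matrix (Fin 2) (Fin 2) ℝ) + J) * (c p • (1 : Matrix (Fin 2) (Fin 2) ℝ) + b • J)
        + F p * ((pderivFst c p) • (1 : Matrix (Fin 2) (Fin 2) ℝ)) :=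
    (hasDerivAt_matmul hFθ hB').deriv
  have key : F p * (c p • (1 : Matrix (Fin 2) (Fin 2) ℝ) + b • J) * ((-u p) • (1 : Matrix (Fin 2) (Fin 2) ℝ) + J)
        + F p * ((-pderivSnd u p) • (1 : Matrix (Fin 2) (Fin 2) ℝ))
      = F p * ((-u p) • (1 : Matrix (Fin 2) (Fin 2) ℝ) + J) * (c p • (1 : Matrix (Fin 2) (Fin 2) ℝ) + b • J)
        + F p * ((pderivFst c p) • (1 : Matrix (Fin 2) (Fin 2) ℝ)) := by
    rw [← L, ← R]; exact hmix
  -- the coefficient matrices commute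
  have hcomm : ((-u p) • (1 : Matrix (Fin 2) (Fin 2) ℝ) + J) * (c p • (1 : Matrix (Fin 2) (Fin 2) ℝ) + b • J)
      = (c p • (1 : Matrix (Fin 2) (Fin 2) ℝ) + b • J) * ((-u p) • (1 : Matrix (Fin 2) (Fin 2) ℝ) + J) := by
    rw [hJ]; exact matrix_comm_aux (-u p) (c p) b
  rw [mul_assoc, mul_assoc, ← mul_add, ← mul_add, hcomm] at key
  have key2 := (hFinv p).mul_left_cancel key
  have key3 : ((-pderivSnd u p) • (1 : Matrix (Fin 2) (Fin 2) ℝ)) = ((pderivFst c p) • (1 : Matrix (Fin 2) (Fin 2) ℝ)) :=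
    add_left_cancel key2
  have key4 : -pderivSnd u p = pderivFst c p := by
    have h00 := congrFun (congrFun key3 0) 0
    simpa using h00
  -- rewrite `pderivFst c p` as minus the right-hand side of Burgers
  have key5 : pderivFst c p
      = -pderivFst (fun p' => pderivFst u p' - u p' ^ 2 + b * u p') p := by
    unfold pderivFst
    have e5 : (fun x => c (x, p.2))
        = fun x => -((fun p' => pderivFst u p' - u p' ^ 2 + b * u p') (x, p.2)) + 1 := by
      funext x; simp only [hc_def]; ring
    rw [e5, deriv_add_const, deriv.fun_neg]
    rfl
  rw [key5] at key4
  exact neg_injective key4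
end

section
/- Let a ≠ 0, λ ∈ ℝ, K > 0, let I ⊆ ℝ be an interval, and let q : I → ℝ be a smooth positive function. Define u := −q'/q, and suppose that a·u'(θ) = λ·(K/q(θ)²)^a for all θ ∈ I (real power of the positive base K/q²). Then there exists a constant c ∈ ℝ such that u'(θ) = a·u(θ)² + c for all θ ∈ I. -/
/-- the Euler–Lagrange equation `a u' = λ (K/q²)^a` of the fairing
energy, for the similarity curvature `u = -q'/q` of a smooth positive curvature
radius `q`, implies the Riccati equation `u' = a u² + c` of quasi aesthetic curves
of slope `α = a + 1`. -/
theorem fairing_euler_lagrange_implies_riccati (a lam K : ℝ) (ha : a ≠ 0) (hK : 0 < K)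
    (I : Set ℝ) (hIinterval : I.OrdConnected)
    (q : ℝ → ℝ) (hq : ContDiff ℝ (⊤ : ℕ∞) q) (hqpos : ∀ θ ∈ I, 0 < q θ)
    (u : ℝ → ℝ) (hu : u = fun θ => -deriv q θ / q θ)
    (hEL : ∀ θ ∈ I, a * deriv u θ = lam * (K / q θ ^ 2) ^ a) :
    ∃ c : ℝ, ∀ θ ∈ I, deriv u θ = a * u θ ^ 2 + c := by
  rcases Set.eq_empty_or_nonempty I with hI | ⟨θ₀, hθ₀⟩
  · exact ⟨0, by simp [hI]⟩
  set F : ℝ → ℝ := fun θ => lam * (K / q θ ^ 2) ^ a / a - a * u θ ^ 2 with hF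
  have hq' : ContDiff ℝ ((⊤ : ℕ∞) : WithTop ℕ∞) q := hq.of_le (by simp)
  have hqd : Differentiable ℝ q := (contDiff_infty_iff_deriv.mp hq').1
  have hdq : Differentiable ℝ (deriv q) :=
    (contDiff_infty_iff_deriv.mp (contDiff_infty_iff_deriv.mp hq').2).1
  -- F has derivative 0 at every point of I
  have hF0 : ∀ θ ∈ I, HasDerivAt F 0 θ := by
    intro θ hθ
    have hqθ : 0 < q θ := hqpos θ hθ
    have hqne : q θ ≠ 0 := ne_of_gt hqθ
    have hgpos : 0 < K / q θ ^ 2 := div_pos hK (pow_pos hqθ 2)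
    have hu_diff : DifferentiableAt ℝ u θ := by
      rw [hu]; exact ((hdq θ).neg.div (hqd θ) hqne)
    have hU : HasDerivAt u (deriv u θ) θ := hu_diff.hasDerivAt
    have hg : HasDerivAt (fun t => K / q t ^ 2)
        ((0 * q θ ^ 2 - K * ((2 : ℕ) * q θ ^ (2 - 1) * deriv q θ)) / (q θ ^ 2) ^ 2) θ :=
      (hasDerivAt_const θ K).div ((hqd θ).hasDerivAt.pow 2) (pow_ne_zero 2 hqne)
    have hrp : HasDerivAt (fun t => (K / q t ^ 2) ^ a)
        (((0 * q θ ^ 2 - K * ((2 : ℕ) * q θ ^ (2 - 1) * deriv q θ)) / (q θ ^ 2) ^ 2) * a *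
          (K / q θ ^ 2) ^ (a - 1)) θ :=
      hg.rpow_const (Or.inl hgpos.ne')
    have hFd : HasDerivAt F
        ((((0 * q θ ^ 2 - K * ((2 : ℕ) * q θ ^ (2 - 1) * deriv q θ)) / (q θ ^ 2) ^ 2) * a *
          (K / q θ ^ 2) ^ (a - 1)) * lam / a -
          a * ((2 : ℕ) * u θ ^ (2 - 1) * deriv u θ)) θ :=
      ((hrp.const_mul lam).div_const a).sub ((hU.pow 2).const_mul a) |>.congr_deriv (by ring)
    convert hFd using 1
    have hga : (K / q θ ^ 2) ^ (a - 1) = (K / q θ ^ 2) ^ a / (K / q θ ^ 2) := by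
      rw [Real.rpow_sub hgpos, Real.rpow_one]
    have hEL' := hEL θ hθ
    have huθ : u θ = -deriv q θ / q θ := by rw [hu]
    rw [hga, huθ]
    norm_num
    field_simp
    linear_combination (-2 * deriv q θ) * hEL'
  -- hence F is constant on I
  have hconvex : Convex ℝ I := convex_iff_ordConnected.mpr hIinterval
  refine ⟨F θ₀, fun θ hθ => ?_⟩
  have hconst : F θ = F θ₀ := by
    have h := hconvex.norm_image_sub_le_of_norm_hasDerivWithin_le
      (f := F) (f' := fun _ => (0 : ℝ)) (C := 0)
      (fun x hx => (hF0 x hx).hasDerivWithinAt) (fun x _ => by norm_num) hθ₀ hθ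
    simpa [sub_eq_zero] using h
  have hqθ : 0 < q θ := hqpos θ hθ
  have hEL' := hEL θ hθ
  have : deriv u θ = lam * (K / q θ ^ 2) ^ a / a := by
    field_simp at hEL' ⊢; linarith
  have hFθ : F θ = deriv u θ - a * u θ ^ 2 := by rw [hF]; simp [this]
  have := hconst ▸ hFθ
  linarith [this]
end

section
/- Let a ≠ 0, λ ∈ ℝ, K > 0, let I ⊆ ℝ be an interval, and let q : I → ℝ be a smooth positive function. Define u := −q'/q, and suppose a·u'(θ) = λ·(K/q(θ)²)^a for all θ ∈ I. Then the function H(θ) := a²·u(θ)² − λ·(K/q(θ)²)^a is constant on I. -/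
/-- `H = a² u² - λ (K/q²)^a` is a first integral of the Euler–Lagrange
equation `a u' = λ (K/q²)^a` of the fairing energy, where `u = -q'/q` is the
similarity curvature of a smooth positive curvature radius `q`. -/
theorem fairing_first_integral (a lam K : ℝ) (ha : a ≠ 0) (hK : 0 < K)
    (I : Set ℝ) (hIinterval : I.OrdConnected)
    (q : ℝ → ℝ) (hq : ContDiff ℝ (⊤ : ℕ∞) q) (hqpos : ∀ θ ∈ I, 0 < q θ)
    (u : ℝ → ℝ) (hu : u = fun θ => -deriv q θ / q θ)
    (hEL : ∀ θ ∈ I, a * deriv u θ = lam * (K / q θ ^ 2) ^ a) :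
    ∃ C : ℝ, ∀ θ ∈ I, a ^ 2 * u θ ^ 2 - lam * (K / q θ ^ 2) ^ a = C := by
  rcases I.eq_empty_or_nonempty with rfl | ⟨x₀, hx₀⟩
  · exact ⟨0, by simp⟩
  set g : ℝ → ℝ := fun θ => a ^ 2 * u θ ^ 2 - lam * (K / q θ ^ 2) ^ a with hg
  have hqinf : ContDiff ℝ (⊤ : ℕ∞) q := hq.of_le (by simp)
  have hq1 : ∀ θ, HasDerivAt q (deriv q θ) θ :=
    fun θ => (hqinf.differentiable (by simp) θ).hasDerivAt
  have hqd : ContDiff ℝ (⊤ : ℕ∞) (deriv q) := (contDiff_infty_iff_deriv.mp hqinf).2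
  have hq2 : ∀ θ, HasDerivAt (deriv q) (deriv (deriv q) θ) θ :=
    fun θ => (hqd.differentiable (by simp) θ).hasDerivAt
  have key : ∀ θ ∈ I, HasDerivAt g 0 θ := by
    intro θ hθ
    have hQ : 0 < q θ := hqpos θ hθ
    have hQne : q θ ≠ 0 := ne_of_gt hQ
    set Q := q θ
    set Q' := deriv q θ
    set Q'' := deriv (deriv q) θ
    -- derivative of u
    have hud : HasDerivAt u ((-Q'' * Q - -Q' * Q') / Q ^ 2) θ := by
      rw [hu]
      exact ((hq2 θ).neg).div (hq1 θ) hQne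
    have hderivu : deriv u θ = (-Q'' * Q - -Q' * Q') / Q ^ 2 := hud.deriv
    -- derivative of K / q² 
    have hinner : HasDerivAt (fun t => K / q t ^ 2)
        ((0 * Q ^ 2 - K * ((2 : ℕ) * Q ^ 1 * Q')) / (Q ^ 2) ^ 2) θ :=
      (hasDerivAt_const θ K).div ((hq1 θ).pow 2) (by positivity)
    have hpow : HasDerivAt (fun t => (K / q t ^ 2) ^ a)
        ((0 * Q ^ 2 - K * ((2 : ℕ) * Q ^ 1 * Q')) / (Q ^ 2) ^ 2 * a * (K / Q ^ 2) ^ (a - 1)) θ :=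
      hinner.rpow_const (Or.inl (by positivity))
    have hGD : HasDerivAt g
        (a ^ 2 * (2 * u θ ^ 1 * ((-Q'' * Q - -Q' * Q') / Q ^ 2)) -
         lam * ((0 * Q ^ 2 - K * ((2 : ℕ) * Q ^ 1 * Q')) / (Q ^ 2) ^ 2 * a *
           (K / Q ^ 2) ^ (a - 1))) θ :=
      ((hud.pow 2).const_mul (a ^ 2)).sub (hpow.const_mul lam)
    convert hGD using 1
    have hEL' := hEL θ hθ
    rw [hderivu] at hEL'
    have huθ : u θ = -Q' / Q := by rw [hu]
    have hsub : (K / Q ^ 2) ^ (a - 1) = (K / Q ^ 2) ^ a / (K / Q ^ 2) := by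
      rw [Real.rpow_sub (by positivity), Real.rpow_one]
    set P := (K / Q ^ 2) ^ a
    rw [hsub, huθ]
    have hKQ : K / Q ^ 2 ≠ 0 := by positivity
    have hEL2 : a * (-Q'' * Q - -Q' * Q') = lam * P * Q ^ 2 := by
      field_simp at hEL'
      linarith [hEL']
    field_simp
    linear_combination (2 * a * Q' * K) * hEL2
  -- constancy via MVT
  refine ⟨g x₀, fun θ hθ => ?_⟩
  have h := hIinterval.convex.norm_image_sub_le_of_norm_hasDerivWithin_le
    (f := g) (f' := fun _ => (0 : ℝ)) (C := 0)
    (fun x hx => (key x hx).hasDerivWithinAt) (fun x _ => by simp) hx₀ hθ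
  have h0 : g θ = g x₀ := by
    have := h
    rw [zero_mul] at this
    have := le_antisymm this (norm_nonneg _)
    rwa [norm_eq_zero, sub_eq_zero] at this
  exact h0
end
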